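/- arXiv:1811.02845 — 2 statements merged into one kernel-verified Lean document; each statement's English description precedes it below -/
import Mathlib

section
/- Under the assumptions of the previous statement (ν positive on nonempty relatively open sets, sup_X |f_k − f_∞| → 0 with ‖f_∞‖_{L^∞(X,ν)} > 0, and ν_{k_i} → ν_∞ weakly*), if in addition the modulus |f_∞| is continuous on X, then the support of ν_∞ is contained in the set { x ∈ X : |f_∞(x)| = ‖f_∞‖_{L^∞(X,ν)} }. -/
open MeasureTheory Filter Metric
open scoped ENNReal Topology

set_option maxHeartbeats 800000

noncomputable section

/-- `n`-dimensional Euclidean space. -/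
abbrev Euc (n : ℕ) := EuclideanSpace ℝ (Fin n)

/-- The `k`-regularisation `|a|_{(k)} = √(a² + k⁻²)` of the absolute value. -/
def regAbs (k : ℕ) (a : ℝ) : ℝ := Real.sqrt (a ^ 2 + ((k : ℝ)⁻¹) ^ 2)

/-- The normalised `L^k` norm `‖g‖_{L^k(X,ν)} = ((1/ν(X)) ∫_X |g|^k dν)^(1/k)`. -/
def nLkNorm {n : ℕ} (k : ℕ) (ν : Measure (Euc n)) (X : Set (Euc n)) (g : Euc n → ℝ) : ℝ :=
  ((ν X).toReal⁻¹ * ∫ x in X, |g x| ^ (k : ℝ) ∂ν) ^ ((k : ℝ)⁻¹)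

/-- The `L^∞(X,ν)` norm: the `ν`-essential supremum of `|g|` on `X`. -/
def nLinfNorm {n : ℕ} (ν : Measure (Euc n)) (X : Set (Euc n)) (g : Euc n → ℝ) : ℝ :=
  essSup (fun x => |g x|) (ν.restrict X)

/-- The density `(1/ν(X)) (|f|_{(k)})^{k−2} f / ‖|f|_{(k)}‖^{k−1}_{L^k(X,ν)}`
of the `k`-th concentration measure with respect to `ν`. -/
def concDensity {n : ℕ} (k : ℕ) (ν : Measure (Euc n)) (X : Set (Euc n))
    (f : Euc n → ℝ) : Euc n → ℝ :=
  fun x => (ν X).toReal⁻¹ *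
    (regAbs k (f x) ^ ((k : ℝ) - 2) * f x /
      nLkNorm k ν X (fun y => regAbs k (f y)) ^ ((k : ℝ) - 1))

/-- The integral of a real function against a signed measure, via the Jordan decomposition. -/
def sInt {n : ℕ} (μ : SignedMeasure (Euc n)) (g : Euc n → ℝ) : ℝ :=
  ∫ x, g x ∂μ.toJordanDecomposition.posPart - ∫ x, g x ∂μ.toJordanDecomposition.negPart

/-- The support of a (nonnegative) measure: points all of whose neighbourhoods have
positive measure. -/
def msupport {n : ℕ} (μ : Measure (Euc n)) : Set (Euc n) := {x | ∀ U ∈ 𝓝 x, 0 < μ U}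

/-! ### Auxiliary lemmas -/

lemma vanish_half {n : ℕ} {p q : Measure (Euc n)} [IsFiniteMeasure p] [IsFiniteMeasure q]
    {A U : Set (Euc n)} (hAm : MeasurableSet A) (hpA : p A = 0) (hqA : q Aᶜ = 0)
    (hU : IsOpen U)
    (h : ∀ g : Euc n → ℝ, Continuous g → HasCompactSupport g → tsupport g ⊆ U →
      (∀ x, g x ∈ Set.Icc (0:ℝ) 1) → ∫ x, g x ∂p = ∫ x, g x ∂q) :
    q U = 0 := by
  have key : ∀ ε : ℝ, 0 < ε → (q U).toReal ≤ 2 * ε := by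
    intro ε hε
    have hεne : ENNReal.ofReal ε ≠ 0 := by simp [hε]
    obtain ⟨K, hKsub, hKc, hK⟩ :=
      (hU.measurableSet.inter hAm).exists_isCompact_lt_add (μ := q)
        (measure_ne_top q _) hεne
    obtain ⟨W, hWsub, hWo, hW⟩ :=
      Set.exists_isOpen_lt_add (μ := p) (U ∩ A) (measure_ne_top p _) hεne
    have hpW : p W < ENNReal.ofReal ε := by
      have : p (U ∩ A) = 0 := measure_mono_null Set.inter_subset_right hpA
      rwa [this, zero_add] at hW
    have hKW : K ⊆ W ∩ U := Set.subset_inter (hKsub.trans hWsub) (hKsub.trans Set.inter_subset_left)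
    obtain ⟨L, hLc, hKL, hLsub⟩ := exists_compact_between hKc (hWo.inter hU) hKW
    have hdisj : Disjoint K (interior L)ᶜ := by
      rw [Set.disjoint_compl_right_iff_subset]; exact hKL
    obtain ⟨g, hg1, hg0, hgcs, hg01⟩ :=
      exists_continuous_one_zero_of_isCompact hKc isOpen_interior.isClosed_compl hdisj
    have htsub : tsupport g ⊆ W ∩ U := by
      have h1 : Function.support g ⊆ interior L := by
        intro x hx
        by_contra hx'
        exact hx (hg0 hx')
      calc tsupport g ⊆ closure (interior L) := closure_mono h1
        _ ⊆ L := by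
          rw [hLc.isClosed.closure_subset_iff]; exact interior_subset
        _ ⊆ W ∩ U := hLsub
    have hgc : Continuous g := g.continuous
    have hgip : Integrable g p := hgc.integrable_of_hasCompactSupport hgcs
    have hgiq : Integrable g q := hgc.integrable_of_hasCompactSupport hgcs
    have hqK : (q K).toReal ≤ ∫ x, g x ∂q := by
      have e1 : (q K).toReal = ∫ x in K, (1:ℝ) ∂q := by
        rw [setIntegral_const]; simp; rfl
      have e2 : ∫ x in K, (1:ℝ) ∂q = ∫ x in K, g x ∂q := by
        refine setIntegral_congr_fun hKc.measurableSet ?_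
        intro x hx; exact (hg1 hx).symm
      rw [e1, e2]
      refine setIntegral_le_integral hgiq ?_
      exact Eventually.of_forall fun x => (hg01 x).1
    have hpInt : ∫ x, g x ∂p ≤ (p (W ∩ U)).toReal := by
      have hmono : ∀ x, g x ≤ (W ∩ U).indicator (fun _ => (1:ℝ)) x := by
        intro x
        by_cases hx : x ∈ W ∩ U
        · rw [Set.indicator_of_mem hx]; exact (hg01 x).2
        · rw [Set.indicator_of_notMem hx]
          have : x ∉ tsupport g := fun hmem => hx (htsub hmem)
          rw [image_eq_zero_of_notMem_tsupport this]
      have hind : Integrable ((W ∩ U).indicator (fun _ => (1:ℝ))) p :=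
        (integrable_const (1:ℝ)).indicator (hWo.inter hU).measurableSet
      calc ∫ x, g x ∂p ≤ ∫ x, (W ∩ U).indicator (fun _ => (1:ℝ)) x ∂p :=
            integral_mono hgip hind hmono
        _ = (p (W ∩ U)).toReal := by
            rw [integral_indicator (hWo.inter hU).measurableSet]
            simp [setIntegral_const]; rfl
    have hqU1 : q U ≤ q (U ∩ A) := by
      calc q U ≤ q ((U ∩ A) ∪ Aᶜ) := measure_mono (by
            intro x hx
            by_cases hxA : x ∈ A
            · exact Or.inl ⟨hx, hxA⟩
            · exact Or.inr hxA)
        _ ≤ q (U ∩ A) + q Aᶜ := measure_union_le _ _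
        _ = q (U ∩ A) := by rw [hqA, add_zero]
    have h1 : (q U).toReal ≤ (q (U ∩ A)).toReal :=
      ENNReal.toReal_mono (measure_ne_top _ _) hqU1
    have h2 : (q (U ∩ A)).toReal ≤ (q K).toReal + ε := by
      have := ENNReal.toReal_mono (by finiteness) hK.le
      rwa [ENNReal.toReal_add (measure_ne_top _ _) ENNReal.ofReal_ne_top,
        ENNReal.toReal_ofReal hε.le] at this
    have h3 : (p (W ∩ U)).toReal ≤ ε := by
      have hle : p (W ∩ U) ≤ ENNReal.ofReal ε :=
        le_trans (measure_mono Set.inter_subset_left) hpW.le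
      have := ENNReal.toReal_mono ENNReal.ofReal_ne_top hle
      rwa [ENNReal.toReal_ofReal hε.le] at this
    have heq := h g hgc hgcs (htsub.trans Set.inter_subset_right) hg01
    linarith
  have h0 : (q U).toReal = 0 := by
    by_contra h'
    have hpos : 0 < (q U).toReal := lt_of_le_of_ne ENNReal.toReal_nonneg (Ne.symm h')
    have := key ((q U).toReal / 4) (by linarith)
    linarith
  rw [← ENNReal.ofReal_toReal (measure_ne_top q U), h0]; simp

lemma vanish {n : ℕ} {p q : Measure (Euc n)} [IsFiniteMeasure p] [IsFiniteMeasure q]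
    (hpq : p ⟂ₘ q) {U : Set (Euc n)} (hU : IsOpen U)
    (h : ∀ g : Euc n → ℝ, Continuous g → HasCompactSupport g → tsupport g ⊆ U →
      (∀ x, g x ∈ Set.Icc (0:ℝ) 1) → ∫ x, g x ∂p = ∫ x, g x ∂q) :
    p U = 0 ∧ q U = 0 := by
  obtain ⟨A, hAm, hpA, hqA⟩ := hpq
  constructor
  · refine vanish_half (A := Aᶜ) hAm.compl hqA ?_ hU
      (fun g hc hcs hts h01 => (h g hc hcs hts h01).symm)
    rwa [compl_compl]
  · exact vanish_half hAm hpA hqA hU h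

lemma msing_ofReal {n : ℕ} {ν : Measure (Euc n)} {d : Euc n → ℝ} (hd : AEMeasurable d ν) :
    (ν.withDensity fun x => ENNReal.ofReal (d x)) ⟂ₘ
      (ν.withDensity fun x => ENNReal.ofReal (-d x)) := by
  set d' := hd.mk d with hd'def
  have hmeas : Measurable d' := hd.measurable_mk
  have hae : d =ᵐ[ν] d' := hd.ae_eq_mk
  have e1 : (ν.withDensity fun x => ENNReal.ofReal (d x))
      = ν.withDensity fun x => ENNReal.ofReal (d' x) :=
    withDensity_congr_ae (hae.mono fun x hx => by simp only [hx])
  have e2 : (ν.withDensity fun x => ENNReal.ofReal (-d x))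
      = ν.withDensity fun x => ENNReal.ofReal (-d' x) :=
    withDensity_congr_ae (hae.mono fun x hx => by simp only [hx])
  rw [e1, e2]
  set A := {x | 0 ≤ d' x} with hA
  have hAm : MeasurableSet A := measurableSet_le measurable_const hmeas
  refine ⟨Aᶜ, hAm.compl, ?_, ?_⟩
  · rw [withDensity_apply _ hAm.compl]
    rw [show (0:ℝ≥0∞) = ∫⁻ x in Aᶜ, 0 ∂ν by simp]
    refine setLIntegral_congr_fun hAm.compl (fun x hx => ?_)
    simp only [Set.mem_compl_iff, hA, Set.mem_setOf_eq, not_le] at hx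
    simp [ENNReal.ofReal_eq_zero, hx.le]
  · rw [compl_compl, withDensity_apply _ hAm]
    rw [show (0:ℝ≥0∞) = ∫⁻ x in A, 0 ∂ν by simp]
    refine setLIntegral_congr_fun hAm (fun x hx => ?_)
    simp only [hA, Set.mem_setOf_eq] at hx
    simp [ENNReal.ofReal_eq_zero, hx]

lemma jordan_withDensityᵥ {n : ℕ} {ν : Measure (Euc n)} {d : Euc n → ℝ}
    (hd : Integrable d ν) :
    (SignedMeasure.toJordanDecomposition (ν.withDensityᵥ d)).posPart
        = ν.withDensity (fun x => ENNReal.ofReal (d x)) ∧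
      (SignedMeasure.toJordanDecomposition (ν.withDensityᵥ d)).negPart
        = ν.withDensity (fun x => ENNReal.ofReal (-d x)) := by
  haveI := isFiniteMeasure_withDensity_ofReal hd.2
  haveI := isFiniteMeasure_withDensity_ofReal hd.neg.2
  set j : JordanDecomposition (Euc n) :=
    { posPart := ν.withDensity (fun x => ENNReal.ofReal (d x))
      negPart := ν.withDensity (fun x => ENNReal.ofReal (-d x))
      posPart_finite := by infer_instance
      negPart_finite := by infer_instance
      mutuallySingular := msing_ofReal hd.aemeasurable } with hj
  have heq : ν.withDensityᵥ d = j.toSignedMeasure :=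
    withDensityᵥ_eq_withDensity_pos_part_sub_withDensity_neg_part hd
  have := MeasureTheory.SignedMeasure.toJordanDecomposition_eq heq
  rw [this]
  exact ⟨rfl, rfl⟩

lemma integrable_toNNReal_smul {n : ℕ} {ν : Measure (Euc n)} {d : Euc n → ℝ}
    (hd : Integrable d ν) {g : Euc n → ℝ} (hg : Continuous g) {C : ℝ} (hgb : ∀ x, |g x| ≤ C) :
    Integrable (fun x => ((d x).toNNReal : ℝ) • g x) ν := by
  have heq : (fun x => ((d x).toNNReal : ℝ) • g x) = fun x => g x * max (d x) 0 := by
    funext x; rw [Real.coe_toNNReal']; simp [smul_eq_mul]; ring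
  rw [heq]
  exact hd.pos_part.bdd_mul (c := C) hg.aestronglyMeasurable (Eventually.of_forall fun x => by
    rw [Real.norm_eq_abs]; exact hgb x)

lemma sInt_withDensityᵥ {n : ℕ} {ν : Measure (Euc n)} {d : Euc n → ℝ} (hd : Integrable d ν)
    {g : Euc n → ℝ} (hg : Continuous g) {C : ℝ} (hgb : ∀ x, |g x| ≤ C) :
    sInt (ν.withDensityᵥ d) g = ∫ x, g x * d x ∂ν := by
  obtain ⟨hpos, hneg⟩ := jordan_withDensityᵥ hd
  rw [sInt, hpos, hneg]
  have hd1 : AEMeasurable (fun x => (d x).toNNReal) ν := hd.aemeasurable.real_toNNReal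
  have hd2 : AEMeasurable (fun x => (-d x).toNNReal) ν := hd.neg.aemeasurable.real_toNNReal
  have e1 : ∫ x, g x ∂(ν.withDensity fun x => ENNReal.ofReal (d x))
      = ∫ x, ((d x).toNNReal : ℝ) • g x ∂ν := by
    rw [show (fun x => ENNReal.ofReal (d x)) = (fun x => ((d x).toNNReal : ℝ≥0∞)) from rfl,
      integral_withDensity_eq_integral_smul₀ hd1 g]
    simp [NNReal.smul_def]
  have e2 : ∫ x, g x ∂(ν.withDensity fun x => ENNReal.ofReal (-d x))
      = ∫ x, ((-d x).toNNReal : ℝ) • g x ∂ν := by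
    rw [show (fun x => ENNReal.ofReal (-d x)) = (fun x => (((-d x)).toNNReal : ℝ≥0∞)) from rfl,
      integral_withDensity_eq_integral_smul₀ hd2 g]
    simp [NNReal.smul_def]
  rw [e1, e2, ← integral_sub (integrable_toNNReal_smul hd hg hgb)
    (by simpa using integrable_toNNReal_smul hd.neg hg hgb)]
  refine integral_congr_ae (Eventually.of_forall fun x => ?_)
  simp only [smul_eq_mul, Real.coe_toNNReal']
  rcases le_total 0 (d x) with h | h
  · rw [max_eq_left h, max_eq_right (neg_nonpos.2 h)]; ring
  · rw [max_eq_right h, max_eq_left (neg_nonneg.2 h)]; ring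

lemma regAbs_nonneg (k : ℕ) (a : ℝ) : 0 ≤ regAbs k a := Real.sqrt_nonneg _

lemma regAbs_continuous (k : ℕ) : Continuous (regAbs k) :=
  Real.continuous_sqrt.comp (by continuity)

lemma abs_le_regAbs (k : ℕ) (a : ℝ) : |a| ≤ regAbs k a := by
  rw [regAbs, ← Real.sqrt_sq_eq_abs]
  exact Real.sqrt_le_sqrt (le_add_of_nonneg_right (by positivity))

lemma regAbs_le (k : ℕ) (a : ℝ) : regAbs k a ≤ |a| + ((k : ℝ))⁻¹ := by
  have hk : 0 ≤ ((k:ℝ))⁻¹ := by positivity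
  rw [regAbs]
  calc Real.sqrt (a ^ 2 + ((k:ℝ)⁻¹) ^ 2) ≤ Real.sqrt ((|a| + (k:ℝ)⁻¹) ^ 2) := by
        apply Real.sqrt_le_sqrt
        nlinarith [sq_abs a, abs_nonneg a]
    _ = |a| + (k:ℝ)⁻¹ := Real.sqrt_sq (by positivity)

lemma memtop_bound {n : ℕ} {ν : Measure (Euc n)} {h : Euc n → ℝ} (hh : MemLp h ⊤ ν) :
    ∃ C : ℝ, 0 ≤ C ∧ ∀ᵐ x ∂ν, |h x| ≤ C := by
  have h1 := hh.2
  rw [eLpNorm_exponent_top] at h1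
  refine ⟨(eLpNormEssSup h ν).toReal, ENNReal.toReal_nonneg, ?_⟩
  filter_upwards [ae_le_eLpNormEssSup (f := h) (μ := ν)] with x hx
  have h2 : ((‖h x‖₊ : ℝ≥0∞)).toReal ≤ (eLpNormEssSup h ν).toReal :=
    ENNReal.toReal_mono h1.ne hx
  simpa [Real.norm_eq_abs] using h2

lemma integrable_concDensity {n : ℕ} {ν : Measure (Euc n)} [IsFiniteMeasure ν]
    {X : Set (Euc n)} {k : ℕ} (hk : 3 ≤ k) {fk : Euc n → ℝ} (hfk : MemLp fk ⊤ ν) :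
    Integrable (concDensity k ν X fk) ν := by
  obtain ⟨C, hC0, hC⟩ := memtop_bound hfk
  have hk3 : (3:ℝ) ≤ (k:ℝ) := by exact_mod_cast hk
  have he : (0:ℝ) ≤ (k:ℝ) - 2 := by linarith
  set E := nLkNorm k ν X (fun y => regAbs k (fk y)) ^ ((k : ℝ) - 1) with hE
  have hG : Continuous (fun t : ℝ => regAbs k t ^ ((k:ℝ) - 2)) :=
    (Real.continuous_rpow_const he).comp (regAbs_continuous k)
  have heq : concDensity k ν X fk
      = fun x => (regAbs k (fk x) ^ ((k:ℝ) - 2)) * fk x * ((ν X).toReal⁻¹ / E) := by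
    funext x
    rw [concDensity, ← hE]
    rw [div_eq_mul_inv, div_eq_mul_inv]
    ring
  rw [heq]
  apply Integrable.mul_const
  apply Integrable.bdd_mul (c := (C+1) ^ ((k:ℝ) - 2)) (hfk.integrable le_top)
    (hG.comp_aestronglyMeasurable hfk.1)
  filter_upwards [hC] with x hx
  have hkinv : ((k:ℝ))⁻¹ ≤ 1 := by
    rw [inv_le_one_iff₀]; right; linarith
  have h1 : regAbs k (fk x) ≤ C + 1 := by
    have := regAbs_le k (fk x); linarith
  have h2 : regAbs k (fk x) ^ ((k:ℝ)-2) ≤ (C+1) ^ ((k:ℝ)-2) :=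
    Real.rpow_le_rpow (regAbs_nonneg _ _) h1 he
  rw [Real.norm_eq_abs, abs_of_nonneg (Real.rpow_nonneg (regAbs_nonneg _ _) _)]
  exact h2

lemma integrable_rpow_regAbs {n : ℕ} {ν : Measure (Euc n)} [IsFiniteMeasure ν]
    {k : ℕ} (hk : 1 ≤ k) {fk : Euc n → ℝ} (hfk : MemLp fk ⊤ ν) :
    Integrable (fun x => |regAbs k (fk x)| ^ (k:ℝ)) ν := by
  obtain ⟨C, hC0, hC⟩ := memtop_bound hfk
  have hH : Continuous (fun t : ℝ => |regAbs k t| ^ (k:ℝ)) :=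
    (Real.continuous_rpow_const (by positivity)).comp (regAbs_continuous k).abs
  refine (memLp_top_of_bound (hH.comp_aestronglyMeasurable hfk.1) ((C+1) ^ (k:ℝ)) ?_).integrable
    le_top
  filter_upwards [hC] with x hx
  have hkinv : ((k:ℝ))⁻¹ ≤ 1 := by
    rw [inv_le_one_iff₀]; right; exact_mod_cast hk
  have h1 : |regAbs k (fk x)| ≤ C + 1 := by
    rw [abs_of_nonneg (regAbs_nonneg _ _)]
    have := regAbs_le k (fk x); linarith
  rw [Real.norm_eq_abs, abs_of_nonneg (Real.rpow_nonneg (abs_nonneg _) _)]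
  exact Real.rpow_le_rpow (abs_nonneg _) h1 (by positivity)


lemma nLinfNorm_le_of_null {n : ℕ} {X : Set (Euc n)} (hXm : MeasurableSet X)
    {ν : Measure (Euc n)} (hν0 : 0 < ν X) (finf : Euc n → ℝ) {c : ℝ}
    (h : ν.restrict X {x | c < |finf x|} = 0) :
    nLinfNorm ν X finf ≤ c := by
  have hbb : BddBelow {a : ℝ | ν.restrict X {x | a < |finf x|} = 0} := by
    refine ⟨0, fun a ha => ?_⟩
    by_contra ha'
    push_neg at ha'
    have huniv : {x : Euc n | a < |finf x|} = Set.univ := by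
      ext x; simp only [Set.mem_setOf_eq, Set.mem_univ, iff_true]
      exact lt_of_lt_of_le ha' (abs_nonneg _)
    rw [Set.mem_setOf_eq, huniv] at ha
    rw [Measure.restrict_apply' hXm, Set.univ_inter] at ha
    exact hν0.ne' ha
  rw [nLinfNorm, essSup_eq_sInf]
  exact csInf_le hbb h

lemma null_of_lt_nLinfNorm {n : ℕ} {X : Set (Euc n)}
    {ν : Measure (Euc n)} {finf : Euc n → ℝ} {Cf : ℝ} (hCf : ∀ᵐ x ∂ν, |finf x| ≤ Cf)
    {c : ℝ} (hc : nLinfNorm ν X finf < c) :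
    ν.restrict X {x | ¬ |finf x| < c} = 0 := by
  have hbdd : IsBoundedUnder (· ≤ ·) (ae (ν.restrict X)) (fun x => |finf x|) :=
    ⟨Cf, eventually_map.2 (hCf.filter_mono (ae_mono Measure.restrict_le_self))⟩
  have h1 : essSup (fun x => |finf x|) (ν.restrict X) < c := hc
  have h2 := ae_lt_of_essSup_lt h1 hbdd
  rw [ae_iff] at h2
  exact h2

/-- **Support of the limit concentration measure, continuous case.**
Under the assumptions of the previous statement, if moreover `|f_∞|` is continuous on `X`,
then `supp(ν_∞) ⊆ { x ∈ X : |f_∞(x)| = ‖f_∞‖_{L^∞(X,ν)} }`. -/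
theorem support_limit_concentration_measure_of_continuous
    {n : ℕ} (X : Set (Euc n)) (hXc : IsCompact X) (hXm : MeasurableSet X)
    (ν : Measure (Euc n)) [IsFiniteMeasure ν] (hνX : ν Xᶜ = 0) (hν0 : 0 < ν X)
    (hνpos : ∀ V : Set (Euc n), IsOpen V → (X ∩ V).Nonempty → 0 < ν (X ∩ V))
    (f : ℕ → Euc n → ℝ) (hf : ∀ k, MemLp (f k) ⊤ ν)
    (finf : Euc n → ℝ) (hfinf : MemLp finf ⊤ ν)
    (hM : 0 < nLinfNorm ν X finf)
    (hconv : TendstoUniformlyOn f finf atTop X)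
    (hcont : ContinuousOn (fun x => |finf x|) X)
    (φ : ℕ → ℕ) (hφ : StrictMono φ)
    (νinf : SignedMeasure (Euc n))
    (hweak : ∀ g : Euc n → ℝ, Continuous g →
      Tendsto (fun i => sInt (ν.withDensityᵥ (concDensity (φ i) ν X (f (φ i)))) g)
        atTop (𝓝 (sInt νinf g))) :
    msupport (SignedMeasure.totalVariation νinf) ⊆
      {x ∈ X | |finf x| = nLinfNorm ν X finf} := by
  intro x₀ hx₀
  set M := nLinfNorm ν X finf with hMdef
  have hφt : Tendsto φ atTop atTop := hφ.tendsto_atTop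
  have haeX : ∀ᵐ x ∂ν, x ∈ X := by
    rw [ae_iff]; exact hνX
  obtain ⟨Cf, hCf0, hCf⟩ := memtop_bound hfinf
  -- Master claim: if all concentration integrals of test functions in an open neighbourhood
  -- of x₀ tend to 0, contradiction with x₀ ∈ supp.
  have master : ∀ B : Set (Euc n), IsOpen B → x₀ ∈ B →
      (∀ g : Euc n → ℝ, Continuous g → HasCompactSupport g → tsupport g ⊆ B →
        (∀ x, g x ∈ Set.Icc (0:ℝ) 1) →
        Tendsto (fun i => sInt (ν.withDensityᵥ (concDensity (φ i) ν X (f (φ i)))) g)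
          atTop (𝓝 0)) → False := by
    intro B hBo hBx hg0
    have hvan : ∀ g : Euc n → ℝ, Continuous g → HasCompactSupport g → tsupport g ⊆ B →
        (∀ x, g x ∈ Set.Icc (0:ℝ) 1) →
        ∫ x, g x ∂νinf.toJordanDecomposition.posPart
          = ∫ x, g x ∂νinf.toJordanDecomposition.negPart := by
      intro g hc hcs hts h01
      have h2 := tendsto_nhds_unique (hweak g hc) (hg0 g hc hcs hts h01)
      rw [sInt] at h2
      exact sub_eq_zero.mp h2
    obtain ⟨hp0, hq0⟩ := vanish νinf.toJordanDecomposition.mutuallySingular hBo hvan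
    have htv : νinf.totalVariation B = 0 := by
      rw [SignedMeasure.totalVariation, Measure.add_apply, hp0, hq0, add_zero]
    have := hx₀ B (hBo.mem_nhds hBx)
    rw [htv] at this
    exact lt_irrefl 0 this
  by_cases hxX : x₀ ∈ X
  swap
  · exfalso
    apply master Xᶜ hXc.isClosed.isOpen_compl hxX
    intro g hgc hgcs hgts hg01
    have hgb : ∀ x, |g x| ≤ 1 := fun x =>
      abs_le.2 ⟨by linarith [(hg01 x).1], (hg01 x).2⟩
    have hev : (fun i => sInt (ν.withDensityᵥ (concDensity (φ i) ν X (f (φ i)))) g)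
        =ᶠ[atTop] fun _ => (0:ℝ) := by
      filter_upwards [hφt.eventually (eventually_ge_atTop 3)] with i hi
      rw [sInt_withDensityᵥ (integrable_concDensity hi (hf (φ i))) hgc hgb]
      refine integral_eq_zero_of_ae ?_
      filter_upwards [haeX] with x hx
      have hg0' : g x = 0 := image_eq_zero_of_notMem_tsupport fun hmem => (hgts hmem) hx
      simp [hg0']
    exact Tendsto.congr' hev.symm tendsto_const_nhds
  refine ⟨hxX, ?_⟩
  by_contra hne
  rcases lt_or_gt_of_ne hne with hlt | hgt
  · -- main case : |finf x₀| < M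
    set δ := (M - |finf x₀|) / 4 with hδdef
    have hδ : 0 < δ := by rw [hδdef]; linarith
    have hδM : 4 * δ ≤ M := by
      have := abs_nonneg (finf x₀); rw [hδdef]; linarith
    have hx₀' : |finf x₀| < M - 3 * δ := by rw [hδdef]; linarith
    -- a ball on which |finf| < M - 3δ
    have hcw : ContinuousWithinAt (fun x => |finf x|) X x₀ := hcont x₀ hxX
    have hmem : (fun y => |finf y|) ⁻¹' Set.Iio (M - 3 * δ) ∈ 𝓝[X] x₀ :=
      hcw (Iio_mem_nhds hx₀')
    obtain ⟨r, hr, hball⟩ := Metric.mem_nhdsWithin_iff.mp hmem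
    apply master (ball x₀ r) isOpen_ball (mem_ball_self hr)
    intro g hgc hgcs hgts hg01
    have hgb : ∀ x, |g x| ≤ 1 := fun x =>
      abs_le.2 ⟨by linarith [(hg01 x).1], (hg01 x).2⟩
    -- the set S where |finf| > M - δ/2
    obtain ⟨u, huo, huX⟩ := continuousOn_iff'.mp hcont (Set.Ioi (M - δ/2)) isOpen_Ioi
    set S := u ∩ X with hSdef
    have hSm : MeasurableSet S := huo.measurableSet.inter hXm
    have hSν : 0 < ν S := by
      rcases (zero_le : 0 ≤ ν S).lt_or_eq with h | h
      · exact h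
      exfalso
      have hz : ν.restrict X {x | M - δ/2 < |finf x|} = 0 := by
        rw [show {x | M - δ/2 < |finf x|} = (fun x => |finf x|) ⁻¹' Set.Ioi (M - δ/2) from rfl,
          Measure.restrict_apply' hXm, huX]
        exact h.symm
      have h6 := nLinfNorm_le_of_null hXm hν0 finf hz
      rw [← hMdef] at h6
      linarith
    have hνXr : 0 < (ν X).toReal := ENNReal.toReal_pos hν0.ne' (measure_ne_top ν X)
    have hSr : 0 < (ν S).toReal := ENNReal.toReal_pos hSν.ne' (measure_ne_top ν S)
    set ρ := (ν S).toReal / (ν X).toReal with hρdef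
    have hρpos : 0 < ρ := div_pos hSr hνXr
    set cS := M - 3 * δ / 2 with hcSdef
    set c₂ := M - 7 * δ / 4 with hc₂def
    set c₁ := M - 15 * δ / 8 with hc₁def
    have hcS0 : 0 < cS := by rw [hcSdef]; linarith
    have hc₂0 : 0 < c₂ := by rw [hc₂def]; linarith
    have hc₁0 : 0 < c₁ := by rw [hc₁def]; linarith
    have hc₁₂ : c₁ < c₂ := by rw [hc₁def, hc₂def]; linarith
    have hc₂S : c₂ < cS := by rw [hc₂def, hcSdef]; linarith
    -- ρ^(1/k) → 1
    have hrho : Tendsto (fun k : ℕ => ρ ^ ((k:ℝ)⁻¹)) atTop (𝓝 1) := by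
      have h1 : Tendsto (fun k : ℕ => ((k:ℝ)⁻¹) * Real.log ρ) atTop (𝓝 0) := by
        simpa using tendsto_inv_atTop_nhds_zero_nat.mul_const (Real.log ρ)
      have h2 := (Real.continuous_exp.tendsto 0).comp h1
      rw [Real.exp_zero] at h2
      refine h2.congr fun k => ?_
      rw [Function.comp_apply, Real.rpow_def_of_pos hρpos, mul_comm]
    have hfrac : c₂ / cS < 1 := by rw [div_lt_one hcS0]; exact hc₂S
    have hev4 : ∀ᶠ k : ℕ in atTop, c₂ / cS ≤ ρ ^ ((k:ℝ)⁻¹) :=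
      hrho.eventually (eventually_ge_nhds hfrac)
    -- uniform convergence
    have hconv' : ∀ᶠ k : ℕ in atTop, ∀ x ∈ X, |f k x - finf x| < δ := by
      have := Metric.tendstoUniformlyOn_iff.mp hconv δ hδ
      exact this.mono fun k hk x hx => by
        have := hk x hx; rwa [Real.dist_eq, abs_sub_comm] at this
    -- lower bound on nLkNorm
    have hD : ∀ᶠ k : ℕ in atTop,
        c₂ ≤ nLkNorm k ν X (fun y => regAbs k (f k y)) := by
      filter_upwards [hconv', hev4, eventually_ge_atTop 1] with k hconvk hρk hk1
      have hk0 : ((k:ℝ)) ≠ 0 := by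
        have : (1:ℝ) ≤ (k:ℝ) := by exact_mod_cast hk1
        linarith
      have hint : Integrable (fun x => |regAbs k (f k x)| ^ (k:ℝ)) ν :=
        integrable_rpow_regAbs hk1 (hf k)
      have hlow : ∀ x ∈ S, cS ^ (k:ℝ) ≤ |regAbs k (f k x)| ^ (k:ℝ) := by
        intro x hx
        have hxX' : x ∈ X := hx.2
        have hfinfx : M - δ/2 < |finf x| := by
          have hx' : x ∈ (fun x => |finf x|) ⁻¹' Set.Ioi (M - δ/2) ∩ X := by
            rw [huX]; exact hx
          exact hx'.1
        have h2 : |f k x| > cS := by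
          have h3 : |finf x| - |f k x| ≤ |f k x - finf x| := by
            have := abs_sub_abs_le_abs_sub (finf x) (f k x)
            rwa [abs_sub_comm] at this
          have := hconvk x hxX'
          rw [hcSdef]; linarith
        have h4 : cS ≤ |regAbs k (f k x)| := by
          rw [abs_of_nonneg (regAbs_nonneg _ _)]
          exact le_trans h2.le (abs_le_regAbs k (f k x))
        exact Real.rpow_le_rpow hcS0.le h4 (by positivity)
      have step1 : (ν S).toReal * cS ^ (k:ℝ) ≤ ∫ x in S, |regAbs k (f k x)| ^ (k:ℝ) ∂ν := by
        have h5 := setIntegral_mono_on (integrableOn_const)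
          hint.integrableOn hSm hlow
        rwa [setIntegral_const, smul_eq_mul] at h5
      have step2 : ∫ x in S, |regAbs k (f k x)| ^ (k:ℝ) ∂ν
          ≤ ∫ x in X, |regAbs k (f k x)| ^ (k:ℝ) ∂ν := by
        refine setIntegral_mono_set hint.integrableOn
          (Eventually.of_forall fun x => Real.rpow_nonneg (abs_nonneg _) _)
          (HasSubset.Subset.eventuallyLE Set.inter_subset_right)
      have hT : cS ^ (k:ℝ) * ρ
          ≤ (ν X).toReal⁻¹ * ∫ x in X, |regAbs k (f k x)| ^ (k:ℝ) ∂ν := by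
        have h4 := le_trans step1 step2
        have heqn : cS ^ (k:ℝ) * ρ = (ν X).toReal⁻¹ * ((ν S).toReal * cS ^ (k:ℝ)) := by
          rw [hρdef]; field_simp
        rw [heqn]
        exact mul_le_mul_of_nonneg_left h4 (by positivity)
      have hD1 : (cS ^ (k:ℝ) * ρ) ^ ((k:ℝ)⁻¹)
          ≤ nLkNorm k ν X (fun y => regAbs k (f k y)) := by
        rw [nLkNorm]
        exact Real.rpow_le_rpow (by positivity) hT (by positivity)
      have hL : (cS ^ (k:ℝ) * ρ) ^ ((k:ℝ)⁻¹) = cS * ρ ^ ((k:ℝ)⁻¹) := by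
        rw [Real.mul_rpow (by positivity) hρpos.le, ← Real.rpow_mul hcS0.le,
          mul_inv_cancel₀ hk0, Real.rpow_one]
      calc c₂ = cS * (c₂ / cS) := by field_simp
        _ ≤ cS * ρ ^ ((k:ℝ)⁻¹) := mul_le_mul_of_nonneg_left hρk hcS0.le
        _ = (cS ^ (k:ℝ) * ρ) ^ ((k:ℝ)⁻¹) := hL.symm
        _ ≤ _ := hD1
    -- the decay bound
    set bk : ℕ → ℝ := fun k => (ν X).toReal⁻¹ * (c₁ ^ ((k:ℝ) - 2) * M / c₂ ^ ((k:ℝ) - 1))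
      with hbkdef
    have hbk0 : ∀ k, 0 ≤ bk k := by
      intro k
      have h1 : (0:ℝ) ≤ c₁ ^ ((k:ℝ) - 2) := Real.rpow_nonneg hc₁0.le _
      have h2 : (0:ℝ) ≤ c₂ ^ ((k:ℝ) - 1) := Real.rpow_nonneg hc₂0.le _
      rw [hbkdef]
      positivity
    have hbkt : Tendsto bk atTop (𝓝 0) := by
      have hrepr : ∀ k : ℕ, bk k = ((ν X).toReal⁻¹ * M * c₂ / c₁^2) * ((c₁/c₂) ^ k) := by
        intro k
        rw [hbkdef]
        simp only []
        rw [Real.rpow_sub hc₁0, Real.rpow_sub hc₂0, Real.rpow_one,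
          show (2:ℝ) = ((2:ℕ):ℝ) by norm_num,
          Real.rpow_natCast c₁ k, Real.rpow_natCast c₂ k, Real.rpow_natCast c₁ 2, div_pow]
        field_simp
      have h1 : Tendsto (fun k : ℕ => (c₁/c₂) ^ k) atTop (𝓝 0) := by
        apply tendsto_pow_atTop_nhds_zero_of_lt_one (by positivity)
        rw [div_lt_one hc₂0]; exact hc₁₂
      have h2 := h1.const_mul ((ν X).toReal⁻¹ * M * c₂ / c₁^2)
      rw [mul_zero] at h2
      exact h2.congr fun k => (hrepr k).symm
    -- the per-k bound
    have hkey : ∀ᶠ k : ℕ in atTop,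
        |sInt (ν.withDensityᵥ (concDensity k ν X (f k))) g|
          ≤ (ν Set.univ).toReal * bk k := by
      have hinv : ∀ᶠ k : ℕ in atTop, ((k:ℝ))⁻¹ ≤ δ/8 :=
        tendsto_inv_atTop_nhds_zero_nat.eventually (eventually_le_nhds (by linarith))
      filter_upwards [hconv', hD, hinv, eventually_ge_atTop 3] with k hconvk hDk hinvk hk3
      have hk3' : (3:ℝ) ≤ (k:ℝ) := by exact_mod_cast hk3
      have hint := integrable_concDensity (X := X) hk3 (hf k)
      rw [sInt_withDensityᵥ hint hgc hgb]
      have hptw : ∀ᵐ x ∂ν, ‖g x * concDensity k ν X (f k) x‖ ≤ bk k := by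
        filter_upwards [haeX] with x hxX'
        by_cases hxB : x ∈ ball x₀ r
        · have hd : |concDensity k ν X (f k) x| ≤ bk k := by
            rw [concDensity]
            set R := regAbs k (f k x) with hR
            set D := nLkNorm k ν X (fun y => regAbs k (f k y)) with hDdef
            have hR0 : 0 ≤ R := regAbs_nonneg _ _
            have hfx : |f k x| < M - 2 * δ := by
              have h1 : |finf x| < M - 3 * δ := hball ⟨hxB, hxX'⟩
              have h2 : |f k x - finf x| < δ := hconvk x hxX'
              have h3 : |f k x| ≤ |finf x| + |f k x - finf x| := by
                have := abs_add_le (finf x) (f k x - finf x)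
                simpa using this
              linarith
            have hRle : R ≤ c₁ := by
              have := regAbs_le k (f k x)
              rw [hc₁def]; rw [hR]; linarith
            have hnum : R ^ ((k:ℝ)-2) ≤ c₁ ^ ((k:ℝ)-2) :=
              Real.rpow_le_rpow hR0 hRle (by linarith)
            have hden : c₂ ^ ((k:ℝ)-1) ≤ D ^ ((k:ℝ)-1) :=
              Real.rpow_le_rpow hc₂0.le hDk (by linarith)
            have hdenpos : (0:ℝ) < c₂ ^ ((k:ℝ)-1) := Real.rpow_pos_of_pos hc₂0 _
            have hDpos : 0 < D := lt_of_lt_of_le hc₂0 hDk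
            have hfxM : |f k x| ≤ M := by linarith
            have hfrac2 : R ^ ((k:ℝ)-2) * |f k x| / D ^ ((k:ℝ)-1)
                ≤ c₁ ^ ((k:ℝ)-2) * M / c₂ ^ ((k:ℝ)-1) := by
              apply div_le_div₀ (by positivity)
                (mul_le_mul hnum hfxM (abs_nonneg _) (Real.rpow_nonneg hc₁0.le _))
                hdenpos hden
            rw [abs_mul, abs_of_nonneg (inv_nonneg.2 ENNReal.toReal_nonneg), abs_div,
              abs_mul, abs_of_nonneg (Real.rpow_nonneg hR0 _),
              abs_of_nonneg (Real.rpow_nonneg hDpos.le _), hbkdef]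
            exact mul_le_mul_of_nonneg_left hfrac2 (by positivity)
          calc ‖g x * concDensity k ν X (f k) x‖
              = |g x| * |concDensity k ν X (f k) x| := by
                rw [Real.norm_eq_abs, abs_mul]
            _ ≤ 1 * bk k := mul_le_mul (hgb x) hd (abs_nonneg _) zero_le_one
            _ = bk k := one_mul _
        · have hg0' : g x = 0 :=
            image_eq_zero_of_notMem_tsupport fun hmem => hxB (hgts hmem)
          rw [hg0', zero_mul, norm_zero]
          exact hbk0 k
      calc |∫ x, g x * concDensity k ν X (f k) x ∂ν|
          ≤ ∫ x, ‖g x * concDensity k ν X (f k) x‖ ∂ν := by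
            rw [← Real.norm_eq_abs]
            exact norm_integral_le_integral_norm _
        _ ≤ ∫ _x, bk k ∂ν :=
            integral_mono_of_nonneg (Eventually.of_forall fun x => norm_nonneg _)
              (integrable_const _) hptw
        _ = (ν Set.univ).toReal * bk k := by rw [integral_const, smul_eq_mul]; rfl
    -- conclude
    refine squeeze_zero_norm' (a := fun i => (ν Set.univ).toReal * bk (φ i)) ?_ ?_
    · filter_upwards [hφt.eventually hkey] with i hi
      rw [Real.norm_eq_abs]
      exact hi
    · have h2 := (hbkt.comp hφt).const_mul (ν Set.univ).toReal
      rw [mul_zero] at h2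
      exact h2
  · -- case |finf x₀| > M : impossible
    exfalso
    set c := (M + |finf x₀|) / 2 with hcdef
    have hMc : M < c := by rw [hcdef]; linarith
    have hcx : c < |finf x₀| := by rw [hcdef]; linarith
    obtain ⟨u, huo, huX⟩ := continuousOn_iff'.mp hcont (Set.Ioi c) isOpen_Ioi
    have hx₀u : x₀ ∈ u ∩ X := by
      rw [← huX]; exact ⟨hcx, hxX⟩
    have hpos : 0 < ν (X ∩ u) := hνpos u huo ⟨x₀, hx₀u.2, hx₀u.1⟩
    have hz := null_of_lt_nLinfNorm hCf (hMdef ▸ hMc)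
    rw [Measure.restrict_apply' hXm] at hz
    have hsub : X ∩ u ⊆ {x | ¬ |finf x| < c} ∩ X := by
      intro x hx
      have hx' : x ∈ (fun x => |finf x|) ⁻¹' Set.Ioi c ∩ X := by
        rw [huX]; exact ⟨hx.2, hx.1⟩
      exact ⟨not_lt.2 hx'.1.le, hx.1⟩
    exact absurd (measure_mono_null hsub hz) hpos.ne'

end
end

section
/- Suppose ν(U) > 0 for every nonempty relatively open subset U ⊆ X, and that f_∞ ∈ L^∞(X,ν) with ‖f_∞‖_{L^∞(X,ν)} > 0 satisfies sup_X |f_k − f_∞| → 0 as k → ∞. Then for every sufficiently small ε > 0 (in particular for 0 < ε < ‖f_∞‖_{L^∞(X,ν)}), setting X_ε := { x ∈ X : |f_∞|^★(x) < ‖f_∞‖_{L^∞(X,ν)} − 2ε }, where |f_∞|^★ is the ν-essential limsup of |f_∞|, the total variations of the concentration measures satisfy ‖ν_k‖(X_ε) → 0 as k → ∞. -/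
open MeasureTheory Filter Metric
open scoped ENNReal Topology

noncomputable section

/-- The `ν`-essential limsup of `f` on `X` at `x`:
`f^★(x) = inf_{ε>0} (ν-ess sup_{y ∈ B_ε(x)} f(y))`, where `B_ε(x) = X ∩ {y : |y − x| < ε}`. -/
def essLimSup {n : ℕ} (ν : Measure (Euc n)) (X : Set (Euc n)) (f : Euc n → ℝ)
    (x : Euc n) : ℝ :=
  ⨅ ε : Set.Ioi (0 : ℝ), essSup f (ν.restrict (X ∩ Metric.ball x (ε : ℝ)))

lemma regAbs_le_abs_add (k : ℕ) (a : ℝ) : regAbs k a ≤ |a| + (k : ℝ)⁻¹ := by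
  have hb : (0:ℝ) ≤ (k : ℝ)⁻¹ := by positivity
  rw [regAbs]
  have h : a ^ 2 + ((k:ℝ)⁻¹) ^ 2 ≤ (|a| + (k:ℝ)⁻¹) ^ 2 := by
    nlinarith [abs_nonneg a, sq_abs a]
  calc Real.sqrt (a ^ 2 + ((k:ℝ)⁻¹) ^ 2) ≤ Real.sqrt ((|a| + (k:ℝ)⁻¹) ^ 2) :=
        Real.sqrt_le_sqrt h
    _ = |a| + (k:ℝ)⁻¹ := Real.sqrt_sq (by positivity)

lemma regAbs_pos {k : ℕ} (hk : k ≠ 0) (a : ℝ) : 0 < regAbs k a := by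
  have : (0:ℝ) < (k:ℝ) := by exact_mod_cast Nat.pos_of_ne_zero hk
  exact Real.sqrt_pos.2 (by positivity)

lemma ofReal_add_ofReal_neg (a : ℝ) :
    ENNReal.ofReal a + ENNReal.ofReal (-a) = ENNReal.ofReal |a| := by
  rcases le_total 0 a with h | h
  · rw [abs_of_nonneg h, ENNReal.ofReal_eq_zero.2 (by linarith : -a ≤ 0), add_zero]
  · rw [abs_of_nonpos h, ENNReal.ofReal_eq_zero.2 h, zero_add]

lemma tv_withDensityᵥ_apply {α : Type*} [MeasurableSpace α] {μ : Measure α}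
    {g : α → ℝ} (hg : Integrable g μ) {S : Set α} (hS : MeasurableSet S) :
    SignedMeasure.totalVariation (μ.withDensityᵥ g) S = ∫⁻ x in S, ENNReal.ofReal |g x| ∂μ := by
  obtain ⟨g', hg'm, heq⟩ : ∃ g', StronglyMeasurable g' ∧ g =ᵐ[μ] g' :=
    ⟨hg.1.mk g, hg.1.stronglyMeasurable_mk, hg.1.ae_eq_mk⟩
  have hgi' : Integrable g' μ := hg.congr heq
  rw [WithDensityᵥEq.congr_ae heq,
    lintegral_congr_ae (ae_restrict_of_ae (heq.mono fun x hx => by rw [hx]))]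
  haveI := isFiniteMeasure_withDensity_ofReal hgi'.2
  haveI := isFiniteMeasure_withDensity_ofReal hgi'.neg.2
  set P : Set α := {x | 0 < g' x} with hP
  have hPm : MeasurableSet P := measurableSet_lt measurable_const hg'm.measurable
  have hmeas : Measurable fun x => ENNReal.ofReal (g' x) :=
    hg'm.measurable.ennreal_ofReal
  set j : JordanDecomposition α :=
    { posPart := μ.withDensity fun x => ENNReal.ofReal (g' x)
      negPart := μ.withDensity fun x => ENNReal.ofReal (-g' x)
      mutuallySingular := by
        refine ⟨Pᶜ, hPm.compl, ?_, ?_⟩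
        · rw [withDensity_apply _ hPm.compl]
          rw [setLIntegral_congr_fun hPm.compl
            (fun x hx => ENNReal.ofReal_eq_zero.2 (not_lt.1 hx))]
          simp
        · rw [compl_compl, withDensity_apply _ hPm]
          rw [setLIntegral_congr_fun hPm
            (fun x hx => ENNReal.ofReal_eq_zero.2 (by
              simp only [hP, Set.mem_setOf_eq] at hx; linarith))]
          simp } with hj
  have hjs : μ.withDensityᵥ g' = j.toSignedMeasure :=
    withDensityᵥ_eq_withDensity_pos_part_sub_withDensity_neg_part hgi'
  rw [SignedMeasure.totalVariation, SignedMeasure.toJordanDecomposition_eq hjs]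
  show (μ.withDensity fun x => ENNReal.ofReal (g' x)) S
      + (μ.withDensity fun x => ENNReal.ofReal (-g' x)) S = _
  rw [withDensity_apply _ hS, withDensity_apply _ hS, ← lintegral_add_left hmeas]
  exact lintegral_congr fun x => ofReal_add_ofReal_neg (g' x)

/-- **Vanishing of the concentration measures off the maximum set.**
Let `X ⊆ ℝⁿ` be compact and `ν` a finite Borel measure positive on nonempty relatively open
subsets of `X`. Suppose `f_k → f_∞` uniformly on `X` with `‖f_∞‖_{L^∞(X,ν)} > 0`. Then for
every `0 < ε < ‖f_∞‖_{L^∞(X,ν)}`, setting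
`X_ε = { x ∈ X : |f_∞|^★(x) < ‖f_∞‖_{L^∞(X,ν)} − 2ε }`, the total variations of the
concentration measures satisfy `‖ν_k‖(X_ε) → 0` as `k → ∞`. -/
theorem totalVariation_concentration_tendsto_zero
    {n : ℕ} (X : Set (Euc n)) (hXc : IsCompact X) (hXm : MeasurableSet X)
    (ν : Measure (Euc n)) [IsFiniteMeasure ν] (hνX : ν Xᶜ = 0) (hν0 : 0 < ν X)
    (hνpos : ∀ V : Set (Euc n), IsOpen V → (X ∩ V).Nonempty → 0 < ν (X ∩ V))
    (f : ℕ → Euc n → ℝ) (hf : ∀ k, MemLp (f k) ⊤ ν)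
    (finf : Euc n → ℝ) (hfinf : MemLp finf ⊤ ν)
    (hM : 0 < nLinfNorm ν X finf)
    (hconv : TendstoUniformlyOn f finf atTop X) :
    ∀ ε : ℝ, 0 < ε → ε < nLinfNorm ν X finf →
      Tendsto (fun k =>
          SignedMeasure.totalVariation (ν.withDensityᵥ (concDensity k ν X (f k)))
            {x ∈ X | essLimSup ν X (fun y => |finf y|) x < nLinfNorm ν X finf - 2 * ε})
        atTop (𝓝 (0 : ℝ≥0∞)) := by
  intro ε hε hεM
  set M := nLinfNorm ν X finf with hMdef
  set A := {x ∈ X | essLimSup ν X (fun y => |finf y|) x < M - 2 * ε} with hA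
  have hXae : ∀ᵐ x ∂ν, x ∈ X := by
    rw [ae_iff]; exact hνX
  have hres : ν.restrict X = ν := Measure.restrict_eq_self_of_ae_mem hXae
  have hνne : ν ≠ 0 := by
    intro h; rw [h] at hν0; simp at hν0
  haveI : (ae ν).NeBot := ae_neBot.2 hνne
  have hMeq : essSup (fun x => |finf x|) ν = M := by
    rw [hMdef, nLinfNorm, hres]
  -- global bound on finf
  set C := (eLpNorm finf ⊤ ν).toReal with hC
  have hCae : ∀ᵐ x ∂ν, |finf x| ≤ C := by
    have h2 : eLpNormEssSup finf ν ≠ ⊤ := by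
      rw [← eLpNorm_exponent_top]; exact hfinf.2.ne
    filter_upwards [ae_le_eLpNormEssSup (f := finf) (μ := ν)] with x hx
    have h3 : ((‖finf x‖₊ : ℝ≥0∞)).toReal ≤ (eLpNormEssSup finf ν).toReal :=
      ENNReal.toReal_mono h2 hx
    simpa [hC, eLpNorm_exponent_top, Real.norm_eq_abs] using h3
  -- measurable representative of finf
  obtain ⟨g, hgm, hgeq⟩ : ∃ g, StronglyMeasurable g ∧ finf =ᵐ[ν] g :=
    ⟨hfinf.1.mk finf, hfinf.1.stronglyMeasurable_mk, hfinf.1.ae_eq_mk⟩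
  -- constants
  have h2pos : 0 < M - ε/2 := by linarith
  have h34 : 0 < M - 3*ε/4 := by linarith
  have hMε : 0 < M - ε := by linarith
  set τ := (M - 3*ε/4)/(M - ε/2) with hτ
  have hτ1 : τ < 1 := (div_lt_one h2pos).2 (by linarith)
  set r := (M - ε)/(M - 3*ε/4) with hr
  have hr0 : 0 < r := div_pos hMε h34
  have hr1 : r < 1 := (div_lt_one h34).2 (by linarith)
  -- the set where |finf| is close to its sup
  set S' := X ∩ {x | M - ε/4 < |g x|} with hS'
  have hS'm : MeasurableSet S' :=
    hXm.inter (measurableSet_lt measurable_const hgm.measurable.abs)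
  have hS'X : S' ⊆ X := Set.inter_subset_left
  have hS'pos : 0 < ν S' := by
    rcases eq_or_lt_of_le (zero_le : 0 ≤ ν S') with h0 | h0
    · exfalso
      have hae2 : ∀ᵐ x ∂ν, x ∉ S' := by
        rw [ae_iff]; simpa using h0.symm
      have hbound : essSup (fun x => |finf x|) ν ≤ M - ε/4 := by
        apply limsup_le_of_le
          (isCoboundedUnder_le_of_le (ae ν) (fun x => abs_nonneg (finf x)))
        filter_upwards [hae2, hXae, hgeq] with x h1 h2 h3
        rw [hS'] at h1
        have : ¬ (M - ε/4 < |g x|) := fun hc => h1 ⟨h2, hc⟩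
        rw [h3]; linarith [not_lt.1 this]
      rw [hMeq] at hbound; linarith
    · exact h0
  set t := (ν S').toReal / (ν X).toReal with ht
  have hνXt : 0 < (ν X).toReal := ENNReal.toReal_pos hν0.ne' (measure_ne_top ν X)
  have hS't : 0 < (ν S').toReal := ENNReal.toReal_pos hS'pos.ne' (measure_ne_top ν S')
  have ht0 : 0 < t := div_pos hS't hνXt
  -- the open cover and countable subcover
  have hball : ∀ x : {y // y ∈ A}, ∃ ρ, 0 < ρ ∧
      essSup (fun y => |finf y|) (ν.restrict (X ∩ ball (x : Euc n) ρ)) < M - 2*ε := by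
    rintro ⟨x, hx⟩
    have hx2 : essLimSup ν X (fun y => |finf y|) x < M - 2*ε := hx.2
    rw [essLimSup] at hx2
    obtain ⟨⟨ρ, hρ⟩, h⟩ := exists_lt_of_ciInf_lt hx2
    exact ⟨ρ, hρ, h⟩
  choose ρ hρ0 hρ using hball
  set U := ⋃ x : {y // y ∈ A}, ball (x : Euc n) (ρ x) with hU
  have hUopen : IsOpen U := isOpen_iUnion fun _ => isOpen_ball
  obtain ⟨T, hTc, hTU⟩ := TopologicalSpace.isOpen_iUnion_countable
    (fun x : {y // y ∈ A} => ball (x : Euc n) (ρ x)) (fun _ => isOpen_ball)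
  have hAU : A ⊆ X ∩ U := fun x hx =>
    ⟨hx.1, Set.mem_iUnion.2 ⟨⟨x, hx⟩, mem_ball_self (hρ0 _)⟩⟩
  set S := X ∩ U with hSdef
  have hSm : MeasurableSet S := hXm.inter hUopen.measurableSet
  -- a.e. bound on S
  have hSb : ∀ᵐ x ∂ν, x ∈ S → |finf x| ≤ M - 2*ε := by
    have h1 : ∀ i ∈ T, ∀ᵐ x ∂ν, x ∈ X ∩ ball (i : Euc n) (ρ i) → |finf x| ≤ M - 2*ε := by
      intro i _
      have hbdd : IsBoundedUnder (· ≤ ·) (ae (ν.restrict (X ∩ ball (i : Euc n) (ρ i))))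
          (fun y => |finf y|) := ⟨C, eventually_map.2 (ae_restrict_of_ae hCae)⟩
      have hble := ae_le_essSup (μ := ν.restrict (X ∩ ball (i : Euc n) (ρ i)))
        (f := fun y => |finf y|) hbdd
      have h2 : ∀ᵐ x ∂ν.restrict (X ∩ ball (i : Euc n) (ρ i)), |finf x| ≤ M - 2*ε :=
        hble.mono fun y hy => hy.trans (hρ i).le
      exact (ae_restrict_iff' (hXm.inter measurableSet_ball)).1 h2
    have h2 := (ae_ball_iff hTc).2 h1
    filter_upwards [h2] with x hx hxS
    obtain ⟨hxX, hxU⟩ := hxS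
    rw [hU, ← hTU] at hxU
    obtain ⟨i, hiT, hxi⟩ := Set.mem_iUnion₂.1 hxU
    exact hx i hiT ⟨hxX, hxi⟩
  -- eventual facts
  have hev1 : ∀ᶠ k : ℕ in atTop, ∀ x ∈ X, dist (finf x) (f k x) < ε/8 :=
    Metric.tendstoUniformlyOn_iff.1 hconv (ε/8) (by positivity)
  have hev2 : ∀ᶠ k : ℕ in atTop, (k:ℝ)⁻¹ ≤ ε/8 :=
    tendsto_inv_atTop_nhds_zero_nat.eventually (eventually_le_nhds (by positivity))
  have hev3 : ∀ᶠ k : ℕ in atTop, 2 ≤ k := eventually_ge_atTop 2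
  have hev4 : ∀ᶠ k : ℕ in atTop, τ ≤ t ^ ((k:ℝ)⁻¹) := by
    have h2 : ContinuousAt (fun y : ℝ => t ^ y) 0 := Real.continuousAt_const_rpow ht0.ne'
    have h1 : Tendsto (fun k : ℕ => t ^ ((k:ℝ)⁻¹)) atTop (𝓝 1) := by
      have h3 := h2.tendsto.comp tendsto_inv_atTop_nhds_zero_nat
      simpa [Real.rpow_zero, Function.comp_def] using h3
    exact h1.eventually (eventually_ge_nhds hτ1)
  have key : ∀ᶠ k : ℕ in atTop,
      SignedMeasure.totalVariation (ν.withDensityᵥ (concDensity k ν X (f k))) A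
        ≤ ENNReal.ofReal ((ν X).toReal⁻¹ * r ^ ((k:ℝ) - 1)) * ν X := by
    filter_upwards [hev1, hev2, hev3, hev4] with k hk1 hk2 hk3 hk4
    have hk0 : k ≠ 0 := by omega
    have hkR : (2:ℝ) ≤ (k:ℝ) := by exact_mod_cast hk3
    have hkR0 : ((k:ℝ)) ≠ 0 := by
      have : (0:ℝ) < (k:ℝ) := by linarith
      exact this.ne'
    have hk1' : ∀ᵐ x ∂ν, |f k x - finf x| ≤ ε/8 := by
      filter_upwards [hXae] with x hx
      have h := hk1 x hx
      rw [dist_comm, Real.dist_eq] at h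
      exact h.le
    set φ := fun x => regAbs k (f k x) with hφ
    set N := nLkNorm k ν X (fun y => regAbs k (f k y)) with hNdef
    have hφpos : ∀ x, 0 < φ x := fun x => regAbs_pos hk0 _
    have hfkm : AEMeasurable (f k) ν := (hf k).1.aemeasurable
    have hφm : AEMeasurable φ ν := by
      have h : φ = fun x => Real.sqrt ((f k x)^2 + ((k:ℝ)⁻¹)^2) := rfl
      rw [h]
      exact Real.continuous_sqrt.measurable.comp_aemeasurable
        ((hfkm.pow_const 2).add_const _)
    have hrpowm : ∀ e : ℝ, AEMeasurable (fun x => φ x ^ e) ν := by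
      intro e
      have hh : (fun x => φ x ^ e) = fun x => Real.exp (Real.log (φ x) * e) :=
        funext fun x => Real.rpow_def_of_pos (hφpos x) e
      rw [hh]
      exact Real.continuous_exp.measurable.comp_aemeasurable
        ((Real.measurable_log.comp_aemeasurable hφm).mul_const e)
    have hdm : AEStronglyMeasurable (concDensity k ν X (f k)) ν := by
      have hexp : concDensity k ν X (f k)
          = fun x => (ν X).toReal⁻¹ * (φ x ^ ((k:ℝ)-2) * f k x / N ^ ((k:ℝ)-1)) := rfl
      rw [hexp]
      exact ((((hrpowm _).mul hfkm).div_const _).const_mul _).aestronglyMeasurable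
    have hfkb : ∀ᵐ x ∂ν, |f k x| ≤ C + ε/8 := by
      filter_upwards [hCae, hk1'] with x h1 h2
      calc |f k x| = |finf x + (f k x - finf x)| := by ring_nf
        _ ≤ |finf x| + |f k x - finf x| := abs_add_le _ _
        _ ≤ C + ε/8 := add_le_add h1 h2
    have hφb : ∀ᵐ x ∂ν, φ x ≤ C + ε/4 := by
      filter_upwards [hfkb] with x h1
      calc φ x ≤ |f k x| + (k:ℝ)⁻¹ := regAbs_le_abs_add _ _
        _ ≤ C + ε/8 + ε/8 := add_le_add h1 hk2
        _ = C + ε/4 := by ring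
    have habs : ∀ x, |φ x| ^ (k:ℝ) = φ x ^ (k:ℝ) := fun x => by
      rw [abs_of_nonneg (regAbs_nonneg _ _)]
    have hIint : IntegrableOn (fun x => |φ x| ^ (k:ℝ)) X ν := by
      apply Integrable.mono' (integrable_const ((C + ε/4) ^ (k:ℝ)))
      · have hmm : AEMeasurable (fun x => |φ x| ^ (k:ℝ)) ν := by
          have := hrpowm (k:ℝ)
          rwa [show (fun x => φ x ^ (k:ℝ)) = fun x => |φ x| ^ (k:ℝ) from
            funext fun x => (habs x).symm] at this
        exact hmm.aestronglyMeasurable.restrict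
      · filter_upwards [ae_restrict_of_ae hφb] with x h1
        rw [Real.norm_eq_abs, habs x,
          abs_of_nonneg (Real.rpow_nonneg (regAbs_nonneg _ _) _)]
        exact Real.rpow_le_rpow (regAbs_nonneg _ _) h1 (Nat.cast_nonneg k)
    have hlow : ∀ᵐ x ∂ν, x ∈ S' → M - ε/2 ≤ φ x := by
      filter_upwards [hgeq, hk1'] with x h1 h2 hxS
      have h3 : M - ε/4 < |g x| := hxS.2
      have h4 : |finf x| = |g x| := by rw [h1]
      have h5 : |finf x| - |f k x| ≤ ε/8 := by
        have h6 := abs_sub_abs_le_abs_sub (finf x) (f k x)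
        rw [abs_sub_comm] at h6
        linarith
      have h7 : M - ε/2 ≤ |f k x| := by
        rw [h4] at h5
        linarith [hε.le]
      exact h7.trans (abs_le_regAbs _ _)
    have hint1 : (M - ε/2) ^ (k:ℝ) * (ν S').toReal ≤ ∫ x in S', |φ x| ^ (k:ℝ) ∂ν := by
      have hconst : ∫ _x in S', (M - ε/2) ^ (k:ℝ) ∂ν
          = (M - ε/2) ^ (k:ℝ) * (ν S').toReal := by
        rw [setIntegral_const, smul_eq_mul, mul_comm]; rfl
      rw [← hconst]
      apply integral_mono_ae (integrable_const _) (hIint.mono_set hS'X)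
      apply (ae_restrict_iff' hS'm).2
      filter_upwards [hlow] with x hx hxS
      rw [habs x]
      exact Real.rpow_le_rpow h2pos.le (hx hxS) (Nat.cast_nonneg k)
    have hint2 : ∫ x in S', |φ x| ^ (k:ℝ) ∂ν ≤ ∫ x in X, |φ x| ^ (k:ℝ) ∂ν :=
      setIntegral_mono_set hIint
        (ae_of_all _ fun x => Real.rpow_nonneg (abs_nonneg _) _)
        (HasSubset.Subset.eventuallyLE hS'X)
    have hNge : M - 3*ε/4 ≤ N := by
      have h5 : t * (M - ε/2) ^ (k:ℝ) ≤ (ν X).toReal⁻¹ * ∫ x in X, |φ x| ^ (k:ℝ) ∂ν := by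
        have h6 : t * (M - ε/2) ^ (k:ℝ)
            = (ν X).toReal⁻¹ * ((M - ε/2) ^ (k:ℝ) * (ν S').toReal) := by
          rw [ht]; ring
        rw [h6]
        exact mul_le_mul_of_nonneg_left (hint1.trans hint2) (by positivity)
      calc M - 3*ε/4 = τ * (M - ε/2) := by rw [hτ, div_mul_cancel₀ _ h2pos.ne']
        _ ≤ t ^ ((k:ℝ)⁻¹) * (M - ε/2) := mul_le_mul_of_nonneg_right hk4 h2pos.le
        _ = (t * (M - ε/2) ^ (k:ℝ)) ^ ((k:ℝ)⁻¹) := by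
            rw [Real.mul_rpow ht0.le (Real.rpow_nonneg h2pos.le _),
              ← Real.rpow_mul h2pos.le, mul_inv_cancel₀ hkR0, Real.rpow_one]
        _ ≤ ((ν X).toReal⁻¹ * ∫ x in X, |φ x| ^ (k:ℝ) ∂ν) ^ ((k:ℝ)⁻¹) :=
            Real.rpow_le_rpow (by positivity) h5 (by positivity)
        _ = N := by rw [hNdef, nLkNorm]
    have hNpos : 0 < N := h34.trans_le hNge
    have hdabs : ∀ x, |concDensity k ν X (f k) x|
        = (ν X).toReal⁻¹ * (φ x ^ ((k:ℝ)-2) * |f k x| / N ^ ((k:ℝ)-1)) := by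
      intro x
      have hNp : 0 < N ^ ((k:ℝ)-1) := Real.rpow_pos_of_pos hNpos _
      rw [concDensity]
      rw [abs_mul, abs_div, abs_mul, abs_of_nonneg (inv_nonneg.2 ENNReal.toReal_nonneg),
        abs_of_nonneg (Real.rpow_nonneg (regAbs_nonneg _ _) _), abs_of_pos hNp]
    have hek2 : (0:ℝ) ≤ (k:ℝ) - 2 := by linarith
    have hek1 : (0:ℝ) ≤ (k:ℝ) - 1 := by linarith
    have hC0 : (0:ℝ) ≤ C := ENNReal.toReal_nonneg
    have hNp : 0 < N ^ ((k:ℝ)-1) := Real.rpow_pos_of_pos hNpos _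
    have hdb : ∀ᵐ x ∂ν, ‖concDensity k ν X (f k) x‖
        ≤ (ν X).toReal⁻¹ * ((C + ε/4) ^ ((k:ℝ)-2) * (C + ε/8) / N ^ ((k:ℝ)-1)) := by
      filter_upwards [hφb, hfkb] with x h1 h2
      rw [Real.norm_eq_abs, hdabs x]
      apply mul_le_mul_of_nonneg_left _ (by positivity)
      apply (div_le_div_iff_of_pos_right hNp).2
      exact mul_le_mul (Real.rpow_le_rpow (regAbs_nonneg _ _) h1 hek2) h2 (abs_nonneg _)
        (by positivity)
    have hdint : Integrable (concDensity k ν X (f k)) ν :=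
      Integrable.mono' (integrable_const _) hdm hdb
    have hbnd : ∀ᵐ x ∂ν.restrict S, ENNReal.ofReal |concDensity k ν X (f k) x|
        ≤ ENNReal.ofReal ((ν X).toReal⁻¹ * r ^ ((k:ℝ)-1)) := by
      apply (ae_restrict_iff' hSm).2
      filter_upwards [hSb, hk1'] with x h1 h2 hxS
      apply ENNReal.ofReal_le_ofReal
      rw [hdabs x]
      have hfb : |f k x| ≤ M - 2*ε + ε/8 := by
        have h3 := h1 hxS
        have h6 := abs_sub_abs_le_abs_sub (f k x) (finf x)
        linarith
      have hφSb : φ x ≤ M - ε := by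
        calc φ x ≤ |f k x| + (k:ℝ)⁻¹ := regAbs_le_abs_add _ _
          _ ≤ M - 2*ε + ε/8 + ε/8 := add_le_add hfb hk2
          _ ≤ M - ε := by linarith
      have hnum : φ x ^ ((k:ℝ)-2) * |f k x| ≤ (M - ε) ^ ((k:ℝ)-1) := by
        calc φ x ^ ((k:ℝ)-2) * |f k x| ≤ φ x ^ ((k:ℝ)-2) * φ x :=
              mul_le_mul_of_nonneg_left (abs_le_regAbs _ _)
                (Real.rpow_nonneg (regAbs_nonneg _ _) _)
          _ = φ x ^ ((k:ℝ)-1) := by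
              rw [← Real.rpow_add_one (hφpos x).ne']
              congr 1
              ring
          _ ≤ (M - ε) ^ ((k:ℝ)-1) :=
              Real.rpow_le_rpow (regAbs_nonneg _ _) hφSb hek1
      calc (ν X).toReal⁻¹ * (φ x ^ ((k:ℝ)-2) * |f k x| / N ^ ((k:ℝ)-1))
          ≤ (ν X).toReal⁻¹ * ((M-ε) ^ ((k:ℝ)-1) / (M - 3*ε/4) ^ ((k:ℝ)-1)) := by
            apply mul_le_mul_of_nonneg_left _ (by positivity)
            exact div_le_div₀ (by positivity) hnum (Real.rpow_pos_of_pos h34 _)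
              (Real.rpow_le_rpow h34.le hNge hek1)
        _ = (ν X).toReal⁻¹ * r ^ ((k:ℝ)-1) := by
            rw [hr, Real.div_rpow hMε.le h34.le]
    calc SignedMeasure.totalVariation (ν.withDensityᵥ (concDensity k ν X (f k))) A
        ≤ SignedMeasure.totalVariation (ν.withDensityᵥ (concDensity k ν X (f k))) S :=
          measure_mono hAU
      _ = ∫⁻ x in S, ENNReal.ofReal |concDensity k ν X (f k) x| ∂ν :=
          tv_withDensityᵥ_apply hdint hSm
      _ ≤ ∫⁻ _x in S, ENNReal.ofReal ((ν X).toReal⁻¹ * r ^ ((k:ℝ)-1)) ∂ν :=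
          lintegral_mono_ae hbnd
      _ = ENNReal.ofReal ((ν X).toReal⁻¹ * r ^ ((k:ℝ)-1)) * ν S := by
          rw [setLIntegral_const]
      _ ≤ ENNReal.ofReal ((ν X).toReal⁻¹ * r ^ ((k:ℝ)-1)) * ν X :=
          mul_le_mul_right (measure_mono Set.inter_subset_left) _
  have hb : Tendsto (fun k : ℕ => ENNReal.ofReal ((ν X).toReal⁻¹ * r ^ ((k:ℝ)-1)) * ν X)
      atTop (𝓝 0) := by
    have h1 : Tendsto (fun k : ℕ => (ν X).toReal⁻¹ * r ^ ((k:ℝ) - 1)) atTop (𝓝 0) := by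
      have h2 : Tendsto (fun k : ℕ => (k:ℝ) - 1) atTop atTop := by
        simpa [sub_eq_add_neg] using
          tendsto_atTop_add_const_right atTop (-1 : ℝ) tendsto_natCast_atTop_atTop
      have h3 := (tendsto_rpow_atTop_of_base_lt_one r (by linarith) hr1).comp h2
      have h4 := h3.const_mul ((ν X).toReal⁻¹)
      simpa [Function.comp] using h4
    have h4 : Tendsto (fun k : ℕ => ENNReal.ofReal ((ν X).toReal⁻¹ * r ^ ((k:ℝ)-1)))
        atTop (𝓝 0) := by
      have h5 := (ENNReal.continuous_ofReal.tendsto 0).comp h1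
      rw [ENNReal.ofReal_zero] at h5; exact h5
    have h5 := ENNReal.Tendsto.mul_const h4 (Or.inr (measure_ne_top ν X))
    simpa using h5
  exact tendsto_of_tendsto_of_tendsto_of_le_of_le' tendsto_const_nhds hb
    (Eventually.of_forall fun k => zero_le) key

end
end
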